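/- Suppose there exist constants $c_1, c_2 > 0$ and $C$ such that for all large $h$: $P(\sup_{t\in[0,1]} H_t \ge h) \le e^{-c_1 h^{3/2}}$, and the process $H$ satisfies the scaling property $(H_{\lambda t})_{t\ge0} \overset{d}{=} (\lambda^{1/3} H_t)_{t\ge0}$ for all $\lambda > 0$. Then there exists a constant $\tilde{l} < \infty$ such that almost surely $\limsup_{t\to\infty} \frac{H_t}{t^{1/3}(\ln\ln t)^{2/3}} \le \tilde{l}$. -/

import Mathlib

/-!
Along the geometric times `eⁿ`, the scaling property turns the event
`sup_{[0, eⁿ]} H ≥ e^{n/3} aₙ` into `sup_{[0,1]} H ≥ aₙ`, whose probability is at most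
`exp (-c₁ aₙ^{3/2}) = n⁻²` for the threshold `aₙ = ((2/c₁) log n)^{2/3}`. By Borel–Cantelli,
almost surely `sup_{[0, eⁿ]} H < e^{n/3} aₙ` for all large `n`; for `t ∈ [e^{n-1}, eⁿ]` this gives
`H_t ≤ e^{1/3} (4/c₁)^{2/3} t^{1/3} (log log t)^{2/3}`.
-/

open MeasureTheory ProbabilityTheory Filter

open Real TopologicalSpace

theorem Real.iSup_denseSeq_eq_iSup {X : Type*} [TopologicalSpace X] [SeparableSpace X]
    [Nonempty X] {g : X → ℝ} (hg : Continuous g) :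
    ⨆ n, g (denseSeq X n) = ⨆ x, g x := by
  rw [← (denseRange_denseSeq X).ciSup' hg]
  exact Set.rangeFactorization_surjective.iSup_comp fun x : Set.range (denseSeq X) => g x

/- In `ℝ`, a `limsup` that is not cobounded (morally `-∞`) takes the junk value `0`. -/
theorem Real.limsup_le_of_eventually_le_of_nonneg {α : Type*} {f : Filter α} {u : α → ℝ}
    {l : ℝ} (hu : ∀ᶠ x in f, u x ≤ l) (hl : 0 ≤ l) : limsup u f ≤ l := by
  by_cases hc : f.IsCoboundedUnder (· ≤ ·) u
  · exact limsup_le_of_le hc hu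
  · rw [Real.limsup_of_not_isCoboundedUnder hc]
    exact hl

theorem MeasureTheory.ae_eventually_notMem_of_summable_measureReal {α : Type*}
    {_ : MeasurableSpace α} {μ : Measure α} [IsFiniteMeasure μ] {s : ℕ → Set α}
    (hs : Summable fun n => μ.real (s n)) : ∀ᵐ x ∂μ, ∀ᶠ n in atTop, x ∉ s n := by
  refine ae_eventually_notMem ?_
  rw [tsum_congr fun n => (ofReal_measureReal (s := s n)).symm,
    ← ENNReal.ofReal_tsum_of_nonneg (fun _ => measureReal_nonneg) hs]
  exact ENNReal.ofReal_ne_top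

theorem le_iSup_Icc_zero_one_comp_mul {f : ℝ → ℝ} (hf : Continuous f) {lam t : ℝ}
    (hlam : 0 < lam) (ht : t ∈ Set.Icc 0 lam) : f t ≤ ⨆ s : Set.Icc (0:ℝ) 1, f (lam * s) := by
  have hbdd : BddAbove (Set.range fun s : Set.Icc (0:ℝ) 1 => f (lam * s)) :=
    (isCompact_range (by fun_prop)).bddAbove
  have hmem : t / lam ∈ Set.Icc (0:ℝ) 1 :=
    ⟨div_nonneg ht.1 hlam.le, (div_le_one hlam).2 ht.2⟩
  simpa [mul_div_cancel₀ t hlam.ne'] using le_ciSup hbdd ⟨t / lam, hmem⟩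

/- `f ↦ ⨆ t : s, f t` need not be measurable for the product σ-algebra on `ℝ → ℝ`; on continuous
paths it agrees with the supremum along the countable dense sequence `denseSeq s`, which is. -/
theorem measure_le_iSup_eq_of_map_eq {Ω : Type*} {_ : MeasurableSpace Ω} {μ : Measure Ω}
    {X Y : Ω → ℝ → ℝ} (hX : Measurable X) (hY : Measurable Y)
    (hXc : ∀ ω, Continuous (X ω)) (hYc : ∀ ω, Continuous (Y ω)) (hXY : μ.map X = μ.map Y)
    (s : Set ℝ) [Nonempty s] (b : ℝ) :
    μ {ω | b ≤ ⨆ t : s, X ω t} = μ {ω | b ≤ ⨆ t : s, Y ω t} := by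
  set A : Set (ℝ → ℝ) := {f | b ≤ ⨆ n, f (denseSeq s n)}
  have hA : MeasurableSet A :=
    measurableSet_le measurable_const (.iSup fun n => measurable_pi_apply _)
  have hpre : ∀ Z : Ω → ℝ → ℝ, (∀ ω, Continuous (Z ω)) → {ω | b ≤ ⨆ t : s, Z ω t} = Z ⁻¹' A := by
    intro Z hZ
    ext ω
    change b ≤ _ ↔ b ≤ _
    rw [Real.iSup_denseSeq_eq_iSup (g := fun t : s => Z ω t) (by fun_prop)]
  rw [hpre X hXc, hpre Y hYc, ← Measure.map_apply hX hA, ← Measure.map_apply hY hA, hXY]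

theorem eventually_div_rpow_mul_log_log_rpow_le {f : ℝ → ℝ} {α β κ : ℝ} (hα : 0 ≤ α)
    (hβ : 0 ≤ β) (hκ : 0 ≤ κ)
    (hf : ∀ᶠ n : ℕ in atTop, ∀ t ∈ Set.Icc 0 (exp n), f t ≤ exp n ^ α * (κ * log n) ^ β) :
    ∀ᶠ t in atTop, f t / (t ^ α * log (log t) ^ β) ≤ exp 1 ^ α * (2 * κ) ^ β := by
  have hceil : Tendsto (fun t => ⌈log t⌉₊) atTop atTop :=
    tendsto_nat_ceil_atTop.comp tendsto_log_atTop
  filter_upwards [hceil.eventually hf, eventually_ge_atTop (exp 2)] with t ht ht2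
  set n := ⌈log t⌉₊
  have htpos : 0 < t := (exp_pos 2).trans_le ht2
  have hlogt : 2 ≤ log t := (le_log_iff_exp_le htpos).2 ht2
  have hlog2 : 0 < log 2 := log_pos one_lt_two
  have hloglogt : log 2 ≤ log (log t) := log_le_log two_pos hlogt
  have hn_ge : log t ≤ n := Nat.le_ceil _
  have hn_le : (n : ℝ) ≤ log t + 1 := (Nat.ceil_lt_add_one (by linarith)).le
  have hexp_n : exp n ≤ exp 1 * t := by
    calc exp n ≤ exp (log t + 1) := exp_le_exp.2 hn_le
      _ = exp 1 * t := by rw [exp_add, exp_log htpos, mul_comm]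
  have hlog_n : log n ≤ 2 * log (log t) := by
    calc log n ≤ log (2 * log t) := log_le_log (by linarith) (by linarith)
      _ = log 2 + log (log t) := log_mul two_ne_zero (by linarith)
      _ ≤ 2 * log (log t) := by linarith
  rw [div_le_iff₀ (mul_pos (rpow_pos_of_pos htpos _)
    (rpow_pos_of_pos (hlog2.trans_le hloglogt) _))]
  calc f t ≤ exp n ^ α * (κ * log n) ^ β :=
        ht t ⟨htpos.le, by simpa [exp_log htpos] using exp_le_exp.2 hn_ge⟩
    _ ≤ (exp 1 * t) ^ α * (κ * (2 * log (log t))) ^ β := by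
        have : 0 ≤ log n := log_nonneg (by linarith)
        gcongr
    _ = exp 1 ^ α * (2 * κ) ^ β * (t ^ α * log (log t) ^ β) := by
        rw [mul_rpow (exp_pos 1).le htpos.le, ← mul_assoc, mul_comm κ 2,
          mul_rpow (by positivity) (by linarith)]
        ring

theorem exp_neg_mul_rpow_log_eq {c : ℝ} (hc : 0 < c) {x : ℝ} (hx : 1 ≤ x) :
    exp (-c * (((2 / c) * log x) ^ ((2:ℝ) / 3)) ^ ((3:ℝ) / 2)) = x ^ (-2 : ℝ) := by
  have hlog : 0 ≤ log x := log_nonneg hx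
  rw [← rpow_mul (by positivity), show (2:ℝ) / 3 * (3 / 2) = 1 by norm_num, rpow_one,
    rpow_def_of_pos (by linarith : 0 < x)]
  congr 1
  field_simp

theorem measure_mul_le_iSup_comp_mul_eq {Ω : Type*} {_ : MeasurableSpace Ω} {μ : Measure Ω}
    {H : ℝ → Ω → ℝ} (hmeas : ∀ t, Measurable (H t)) (hcont : ∀ ω, Continuous fun t => H t ω)
    {lam c : ℝ} (hc : 0 < c)
    (hlaw : μ.map (fun ω t => H (lam * t) ω) = μ.map (fun ω t => c * H t ω))
    (s : Set ℝ) [Nonempty s] (a : ℝ) :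
    μ {ω | c * a ≤ ⨆ t : s, H (lam * t) ω} = μ {ω | a ≤ ⨆ t : s, H t ω} := by
  rw [measure_le_iSup_eq_of_map_eq (measurable_pi_lambda _ fun t => hmeas _)
    (measurable_pi_lambda _ fun t => (hmeas t).const_mul c) (fun ω => by fun_prop)
    (fun ω => by fun_prop) hlaw]
  congr 1
  ext ω
  change c * a ≤ ⨆ t : s, c * H t ω ↔ a ≤ ⨆ t : s, H t ω
  rw [← Real.mul_iSup_of_nonneg hc.le, mul_le_mul_iff_right₀ hc]

/-- from the tail bound `P(sup_{[0,1]} H ≥ h) ≤ e^{-c₁ h^{3/2}}` and the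
`1/3`-scaling property, a.s. `limsup_{t→∞} H_t / (t^{1/3}(ln ln t)^{2/3}) ≤ l̃ < ∞`. -/
theorem stmt_16 {Ω : Type*} {mΩ : MeasurableSpace Ω}
    (P : Measure Ω) [IsProbabilityMeasure P]
    (H : ℝ → Ω → ℝ) (hmeas : ∀ t, Measurable (H t))
    (hcont : ∀ ω, Continuous fun t => H t ω)
    (c₁ : ℝ) (hc₁ : 0 < c₁)
    (htail : ∀ᶠ h in atTop,
      (P {ω | h ≤ ⨆ t : Set.Icc (0:ℝ) 1, H t.1 ω}).toReal
        ≤ Real.exp (-c₁ * h ^ ((3:ℝ)/2)))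
    (hscale : ∀ lam : ℝ, 0 < lam →
      Measure.map (fun ω => fun t : ℝ => H (lam * t) ω) P =
        Measure.map (fun ω => fun t : ℝ => lam ^ ((1:ℝ)/3) * H t ω) P) :
    ∃ l : ℝ, ∀ᵐ ω ∂P,
      Filter.limsup
        (fun t : ℝ => H t ω / (t ^ ((1:ℝ)/3) * (Real.log (Real.log t)) ^ ((2:ℝ)/3)))
        atTop ≤ l := by
  set a : ℕ → ℝ := fun n => ((2 / c₁) * log n) ^ ((2:ℝ) / 3)
  set E : ℕ → Set Ω := fun n =>
    {ω | exp n ^ ((1:ℝ) / 3) * a n ≤ ⨆ t : Set.Icc (0:ℝ) 1, H (exp n * t) ω}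
  have ha : Tendsto a atTop atTop :=
    (tendsto_rpow_atTop (by norm_num)).comp <| (Real.tendsto_log_atTop.comp
      tendsto_natCast_atTop_atTop).const_mul_atTop (by positivity)
  have hsum : Summable fun n => P.real (E n) := by
    refine (Real.summable_nat_rpow.2 (by norm_num : (-2:ℝ) < -1)).of_norm_bounded_eventually_nat ?_
    filter_upwards [ha.eventually htail, eventually_ge_atTop 1] with n hn hn1
    rw [norm_of_nonneg measureReal_nonneg, measureReal_def,
      measure_mul_le_iSup_comp_mul_eq hmeas hcont (by positivity) (hscale _ (exp_pos n)),
      ← exp_neg_mul_rpow_log_eq hc₁ (by exact_mod_cast hn1)]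
    exact hn
  refine ⟨exp 1 ^ ((1:ℝ) / 3) * (2 * (2 / c₁)) ^ ((2:ℝ) / 3), ?_⟩
  filter_upwards [ae_eventually_notMem_of_summable_measureReal hsum] with ω hω
  refine Real.limsup_le_of_eventually_le_of_nonneg ?_ (by positivity)
  refine eventually_div_rpow_mul_log_log_rpow_le (by norm_num) (by norm_num) (by positivity) ?_
  filter_upwards [hω] with n hn t ht
  exact (le_iSup_Icc_zero_one_comp_mul (hcont ω) (exp_pos n) ht).trans (not_le.1 hn).le
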